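/- Fix a ∈ (0, π/2) and define the conical Wulff shape W_a = { (x,y) ∈ Ω̄_a : min{ J(x,y), J(Ψ_a(x,y)) } ≤ 0 }. If D ≥ 4(2+μ)²/sin²(2a), then W_a is not a convex subset of ℝ². -/

import Mathlib

/-!
Put `R = √(D/(1+μ))`. The effective road Hamiltonian satisfies `H_r(q) ≥ D q² − μ` and
`H_r(q) ≥ q² + 1`, hence `H_r(q) ≥ R² q²` and `H_r ≥ 1`, so `H_r(q) ≥ R q` and `L_r(R) ≤ 0`:
the point `(R, 0)` lies in `W_a`, and by the `Ψ_a`-symmetry of `W_a` so does `Ψ_a(R, 0)`.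
Their midpoint is fixed by `Ψ_a` and sits at height `R sin(2a)/2`, while any path to height `y`
costs at least `y²/4 − 1`. The bound on `D` (with `μ > 0`) gives `R sin(2a) > 4`, so `J > 0`
at the midpoint and it is not in `W_a`.
-/

open Real Filter Set

noncomputable section

/-- The field Lagrangian `L_f(v₁,v₂) = (v₁² + v₂²)/4 − 1`. -/
def Lf (v₁ v₂ : ℝ) : ℝ := (v₁ ^ 2 + v₂ ^ 2) / 4 - 1

/-- The effective road Hamiltonian `H_r(q) = q² + (p_q)² + 1` built from the
critical-slope function `pq`. -/
def Hr (pq : ℝ → ℝ) (q : ℝ) : ℝ := q ^ 2 + pq q ^ 2 + 1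

/-- The road Lagrangian: the Legendre transform of `Hr`. -/
def Lr (pq : ℝ → ℝ) (v : ℝ) : ℝ := ⨆ q : ℝ, (v * q - Hr pq q)

/-- `pq` assigns to each `q` the critical slope `p_q`: it equals `0` when
`(D−1)q² ≤ 1`, and otherwise it is the unique positive root of
`(D−1)q² = p² + 1 + μp/(κν + p)`. -/
def IsCriticalSlope (D μ ν κ : ℝ) (pq : ℝ → ℝ) : Prop :=
  ∀ q : ℝ,
    ((D - 1) * q ^ 2 ≤ 1 → pq q = 0) ∧
    (1 < (D - 1) * q ^ 2 →
      0 < pq q ∧ (D - 1) * q ^ 2 = pq q ^ 2 + 1 + μ * pq q / (κ * ν + pq q))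

/-- The set of candidate costs in the control problem at a point `(x,y)` with
`x ≥ 0`, `y ≥ 0`: the pure-field cost, the broken road-then-field costs, and
(when `y = 0`) the pure-road cost. -/
def Jset (pq : ℝ → ℝ) (x y : ℝ) : Set ℝ :=
  {Lf x y} ∪
    {c | ∃ τ z : ℝ, 0 < τ ∧ τ < 1 ∧ 0 ≤ z ∧ z ≤ x ∧
      c = (1 - τ) * Lf ((x - z) / (1 - τ)) (y / (1 - τ)) + τ * Lr pq (z / τ)} ∪
    (if y = 0 then {Lr pq x} else ∅)

/-- The value function `J(x,y)`, extended evenly in `x`. -/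
def J (pq : ℝ → ℝ) (x y : ℝ) : ℝ := sInf (Jset pq |x| y)
/-- The field Hamiltonian `H_f(q,p) = q² + p² + 1`. -/
def Hf (q p : ℝ) : ℝ := q ^ 2 + p ^ 2 + 1

/-- The road boundary Hamiltonian `F₀(q,p) = Dq² − μp/(κν + p)`. -/
def F0 (D μ ν κ q p : ℝ) : ℝ := D * q ^ 2 - μ * p / (κ * ν + p)

/-- The spreading speed along the road, `inf_{q>0} H_r(q)/q`. -/
def roadSpeed (pq : ℝ → ℝ) : ℝ := sInf ((fun q => Hr pq q / q) '' Set.Ioi (0 : ℝ))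

/-- The directional spreading speed in direction `ϑ` (measured from the
positive `y`-axis). -/
def cstar (pq : ℝ → ℝ) (ϑ : ℝ) : ℝ :=
  sSup {r : ℝ | 0 ≤ r ∧ J pq (r * Real.sin ϑ) (r * Real.cos ϑ) ≤ 0}

/-- Reflection across the line through the origin in direction `(cos a, sin a)`. -/
def Psi (a : ℝ) (p : ℝ × ℝ) : ℝ × ℝ :=
  (p.1 * Real.cos (2 * a) + p.2 * Real.sin (2 * a),
   p.1 * Real.sin (2 * a) - p.2 * Real.cos (2 * a))

/-- The closed cone of opening angle `2a` between the positive `x`-axis and the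
ray at angle `π/2 − 2a` from the positive `y`-axis. -/
def coneA (a : ℝ) : Set (ℝ × ℝ) :=
  {p | ∃ r ϑ : ℝ, 0 ≤ r ∧ π / 2 - 2 * a ≤ ϑ ∧ ϑ ≤ π / 2 ∧
    p = (r * Real.sin ϑ, r * Real.cos ϑ)}

lemma sq_div_four_sub_one_le_Lf (v₁ v₂ : ℝ) : v₂ ^ 2 / 4 - 1 ≤ Lf v₁ v₂ := by
  unfold Lf
  linarith [sq_nonneg v₁]

section Road

variable {pq : ℝ → ℝ}

lemma sq_add_one_le_Hr (q : ℝ) : q ^ 2 + 1 ≤ Hr pq q := by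
  unfold Hr
  linarith [sq_nonneg (pq q)]

namespace IsCriticalSlope

variable {D μ ν κ : ℝ}

lemma mul_sq_sub_le_Hr (hpq : IsCriticalSlope D μ ν κ pq) (hμ : 0 ≤ μ) (hκν : 0 ≤ κ * ν)
    (q : ℝ) : D * q ^ 2 - μ ≤ Hr pq q := by
  rcases le_or_gt ((D - 1) * q ^ 2) 1 with hq | hq
  · have := sq_add_one_le_Hr (pq := pq) q
    nlinarith
  · obtain ⟨hp, hslope⟩ := (hpq q).2 hq
    have hden : 0 < κ * ν + pq q := by positivity
    have hfrac : μ * pq q / (κ * ν + pq q) ≤ μ := by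
      rw [div_le_iff₀ hden]
      nlinarith [mul_nonneg hμ hκν]
    unfold Hr
    linarith

/-- `H_r ≥ D q² − μ` and `H_r ≥ q² + 1`, averaged with weights `1 : μ`. -/
lemma div_mul_sq_le_Hr (hpq : IsCriticalSlope D μ ν κ pq) (hμ : 0 ≤ μ) (hκν : 0 ≤ κ * ν)
    (q : ℝ) : D / (1 + μ) * q ^ 2 ≤ Hr pq q := by
  rw [div_mul_eq_mul_div, div_le_iff₀ (by positivity)]
  nlinarith [hpq.mul_sq_sub_le_Hr hμ hκν q, sq_add_one_le_Hr (pq := pq) q,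
    mul_nonneg hμ (sq_nonneg q)]

lemma mul_le_Hr (hpq : IsCriticalSlope D μ ν κ pq) (hμ : 0 ≤ μ) (hκν : 0 ≤ κ * ν)
    {R : ℝ} (hR : R ^ 2 ≤ D / (1 + μ)) (q : ℝ) : R * q ≤ Hr pq q := by
  have hsq : R ^ 2 * q ^ 2 ≤ Hr pq q :=
    (mul_le_mul_of_nonneg_right hR (sq_nonneg q)).trans (hpq.div_mul_sq_le_Hr hμ hκν q)
  nlinarith [sq_add_one_le_Hr (pq := pq) q, sq_nonneg (R * q - 1)]

end IsCriticalSlope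

lemma Lr_bddAbove (pq : ℝ → ℝ) (v : ℝ) : BddAbove (range fun q => v * q - Hr pq q) := by
  refine ⟨v ^ 2 / 4 - 1, ?_⟩
  rintro _ ⟨q, rfl⟩
  nlinarith [sq_add_one_le_Hr (pq := pq) q, sq_nonneg (v / 2 - q)]

lemma neg_one_le_Lr (hpq0 : pq 0 = 0) (v : ℝ) : -1 ≤ Lr pq v :=
  le_ciSup_of_le (Lr_bddAbove pq v) 0 (by simp [Hr, hpq0])

lemma Lr_nonpos_of_forall_mul_le {v : ℝ} (h : ∀ q, v * q ≤ Hr pq q) : Lr pq v ≤ 0 :=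
  ciSup_le fun q => sub_nonpos.2 (h q)

end Road

section ValueFunction

variable {pq : ℝ → ℝ}

/-- Whatever the share `τ` of time spent on the road, the vertical distance `y` is covered
in the field at cost at least `y²/4 − 1`. -/
lemma sq_div_four_sub_one_le_of_mem_Jset (hpq0 : pq 0 = 0) {x y c : ℝ}
    (hc : c ∈ Jset pq x y) : y ^ 2 / 4 - 1 ≤ c := by
  rcases hc with (rfl | ⟨τ, z, hτ0, hτ1, -, -, rfl⟩) | hc
  · exact sq_div_four_sub_one_le_Lf x y
  · have hτ' : 0 < 1 - τ := by linarith
    have hfield := mul_le_mul_of_nonneg_left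
      (sq_div_four_sub_one_le_Lf ((x - z) / (1 - τ)) (y / (1 - τ))) hτ'.le
    have hscale : y ^ 2 ≤ (1 - τ) * (y / (1 - τ)) ^ 2 := by
      rw [div_pow, mul_div_assoc', sq (1 - τ), mul_div_mul_left _ _ hτ'.ne']
      exact le_div_self (sq_nonneg y) hτ' (by linarith)
    nlinarith [neg_one_le_Lr hpq0 (z / τ)]
  · split_ifs at hc with hy
    · rw [mem_singleton_iff.1 hc, hy]
      simpa using neg_one_le_Lr hpq0 x
    · exact absurd hc (notMem_empty c)

lemma Jset_bddBelow (hpq0 : pq 0 = 0) (x y : ℝ) : BddBelow (Jset pq x y) :=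
  ⟨y ^ 2 / 4 - 1, fun _ hc => sq_div_four_sub_one_le_of_mem_Jset hpq0 hc⟩

lemma sq_div_four_sub_one_le_J (hpq0 : pq 0 = 0) (x y : ℝ) : y ^ 2 / 4 - 1 ≤ J pq x y :=
  le_csInf ⟨_, Or.inl (Or.inl rfl)⟩ fun _ hc => sq_div_four_sub_one_le_of_mem_Jset hpq0 hc

lemma J_le_Lr (hpq0 : pq 0 = 0) {x : ℝ} (hx : 0 ≤ x) : J pq x 0 ≤ Lr pq x := by
  refine csInf_le (Jset_bddBelow hpq0 _ _) (Or.inr ?_)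
  simp [abs_of_nonneg hx]

end ValueFunction

section Reflection

lemma Psi_involutive (a : ℝ) : Function.Involutive (Psi a) := by
  intro p
  have h := sin_sq_add_cos_sq (2 * a)
  ext
  · simp only [Psi]; linear_combination p.1 * h
  · simp only [Psi]; linear_combination p.2 * h

lemma Psi_smul_add_smul (a s t : ℝ) (p q : ℝ × ℝ) :
    Psi a (s • p + t • q) = s • Psi a p + t • Psi a q := by
  ext <;> simp only [Psi, Prod.fst_add, Prod.snd_add, Prod.smul_fst, Prod.smul_snd, smul_eq_mul]
    <;> ring

lemma Psi_half_add_half (a : ℝ) (p : ℝ × ℝ) :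
    Psi a ((1 / 2 : ℝ) • p + (1 / 2 : ℝ) • Psi a p) = (1 / 2 : ℝ) • p + (1 / 2 : ℝ) • Psi a p := by
  rw [Psi_smul_add_smul, Psi_involutive a p, add_comm]

variable {a r : ℝ}

lemma mk_zero_mem_coneA (hr : 0 ≤ r) (ha : 0 ≤ a) : (r, 0) ∈ coneA a :=
  ⟨r, π / 2, hr, by linarith, le_rfl, by simp⟩

lemma Psi_mk_zero_mem_coneA (hr : 0 ≤ r) (ha : 0 ≤ a) : Psi a (r, 0) ∈ coneA a :=
  ⟨r, π / 2 - 2 * a, hr, le_rfl, by linarith, by simp [Psi, sin_pi_div_two_sub, cos_pi_div_two_sub]⟩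

end Reflection

def wulffCone (pq : ℝ → ℝ) (a : ℝ) : Set (ℝ × ℝ) :=
  {p | p ∈ coneA a ∧ min (J pq p.1 p.2) (J pq (Psi a p).1 (Psi a p).2) ≤ 0}

section WulffCone

variable {pq : ℝ → ℝ} {a : ℝ} {p : ℝ × ℝ}

lemma mem_wulffCone_of_J_nonpos (hp : p ∈ coneA a) (hJ : J pq p.1 p.2 ≤ 0) :
    p ∈ wulffCone pq a :=
  ⟨hp, (min_le_left _ _).trans hJ⟩

lemma Psi_mem_wulffCone_of_J_nonpos (hp : Psi a p ∈ coneA a) (hJ : J pq p.1 p.2 ≤ 0) :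
    Psi a p ∈ wulffCone pq a :=
  ⟨hp, (min_le_right _ _).trans (by rwa [Psi_involutive a p])⟩

/-- The midpoint of `p` and `Ψ_a p` is fixed by `Ψ_a`, so both entries of its `min` agree. -/
lemma J_half_add_half_nonpos_of_convex (hconv : Convex ℝ (wulffCone pq a))
    (hp : p ∈ wulffCone pq a) (hΨp : Psi a p ∈ wulffCone pq a) :
    J pq ((1 / 2 : ℝ) • p + (1 / 2 : ℝ) • Psi a p).1
      ((1 / 2 : ℝ) • p + (1 / 2 : ℝ) • Psi a p).2 ≤ 0 := by
  have hm := (hconv hp hΨp (a := 1 / 2) (b := 1 / 2) (by norm_num) (by norm_num) (by norm_num)).2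
  rwa [Psi_half_add_half, min_self] at hm

end WulffCone

lemma four_lt_sqrt_mul {D μ s : ℝ} (hμ : 0 < μ) (hs : 0 < s)
    (hD : 4 * (2 + μ) ^ 2 / s ^ 2 ≤ D) : 4 < √(D / (1 + μ)) * s := by
  rw [div_le_iff₀ (by positivity)] at hD
  rw [← sqrt_sq hs.le, ← sqrt_mul' _ (sq_nonneg s), lt_sqrt (by norm_num),
    div_mul_eq_mul_div, lt_div_iff₀ (by positivity)]
  nlinarith [sq_pos_of_pos hμ]

theorem conical_wulff_nonconvex_general
    (D μ ν κ : ℝ) (hμ : 0 < μ) (hν : 0 < ν) (hκ : 0 < κ)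
    (pq : ℝ → ℝ) (hpq : IsCriticalSlope D μ ν κ pq)
    (a : ℝ) (ha0 : 0 < a) (ha : a < π / 2)
    (hDa : 4 * (2 + μ) ^ 2 / Real.sin (2 * a) ^ 2 ≤ D) :
    ¬ Convex ℝ {p : ℝ × ℝ | p ∈ coneA a ∧
        min (J pq p.1 p.2) (J pq (Psi a p).1 (Psi a p).2) ≤ 0} := by
  have hs : 0 < Real.sin (2 * a) := sin_pos_of_pos_of_lt_pi (by linarith) (by linarith)
  have hpq0 : pq 0 = 0 := (hpq 0).1 (by simp)
  set R := √(D / (1 + μ))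
  have hR2 : R ^ 2 ≤ D / (1 + μ) :=
    (sq_sqrt (div_nonneg ((by positivity : (0 : ℝ) ≤ _).trans hDa) (by positivity))).le
  have hJR : J pq R 0 ≤ 0 := (J_le_Lr hpq0 (sqrt_nonneg _)).trans
    (Lr_nonpos_of_forall_mul_le (hpq.mul_le_Hr hμ.le (by positivity) hR2))
  intro hconv
  have hmid := J_half_add_half_nonpos_of_convex hconv
    (mem_wulffCone_of_J_nonpos (mk_zero_mem_coneA (sqrt_nonneg _) ha0.le) hJR)
    (Psi_mem_wulffCone_of_J_nonpos (Psi_mk_zero_mem_coneA (sqrt_nonneg _) ha0.le) hJR)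
  have hheight : ((1 / 2 : ℝ) • (R, (0 : ℝ)) + (1 / 2 : ℝ) • Psi a (R, 0)).2
      = R * Real.sin (2 * a) / 2 := by
    simp only [Psi, Prod.snd_add, Prod.smul_snd, smul_eq_mul]
    ring
  have hlb := sq_div_four_sub_one_le_J hpq0 _ _ |>.trans hmid
  rw [hheight] at hlb
  nlinarith [four_lt_sqrt_mul hμ hs hDa]

/-- Nonconvexity of the conical Wulff shape for large `D`: if
`D ≥ 4(2+μ)²/sin²(2a)` with `a ∈ (0, π/2)`, then
`W_a = {(x,y) ∈ Ω̄_a : min{J(x,y), J(Ψ_a(x,y))} ≤ 0}` is not convex. -/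
theorem conical_wulff_nonconvex
    (D μ ν κ : ℝ) (hD : 1 < D) (hμ : 0 < μ) (hν : 0 < ν) (hκ : 0 < κ)
    (pq : ℝ → ℝ) (hpq : IsCriticalSlope D μ ν κ pq)
    (a : ℝ) (ha0 : 0 < a) (ha : a < π / 2)
    (hDa : 4 * (2 + μ) ^ 2 / Real.sin (2 * a) ^ 2 ≤ D) :
    ¬ Convex ℝ {p : ℝ × ℝ | p ∈ coneA a ∧
        min (J pq p.1 p.2) (J pq (Psi a p).1 (Psi a p).2) ≤ 0} :=
  conical_wulff_nonconvex_general D μ ν κ hμ hν hκ pq hpq a ha0 ha hDa
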